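/- arXiv:1805.09539 — 3 statements merged into one kernel-verified Lean document; each statement's English description precedes it below -/
import Mathlib

section
/- Let $A$ be the point–$k$-space incidence matrix of $\mathrm{PG}(n,q)$ with $n \geq 2k+1$, and let $\mathcal{L}$ be a set of $k$-subspaces with characteristic vector $\chi$ satisfying $\chi \in (\ker A)^{\perp}$ (row space of $A$). Set $x = |\mathcal{L}| / \binom{n}{k}_q$. Then for every $k$-subspace $\pi$, the number of elements of $\mathcal{L}$ disjoint from $\pi$ equals $(x - \chi(\pi)) \binom{n-k-1}{k}_q \, q^{k^2+k}$. -/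
/-!
Let `N = [n, k]_q` be the number of `k`-spaces through a point and `D = q^(k²+k) [n-k-1, k]_q`
the number of `k`-spaces through a point outside `π` that are disjoint from `π`. Then the vector
`v = N · 1_{disjoint from π} - D · 1 + D N · e_π` sums to zero over the `k`-spaces through any
point, i.e. `v ∈ ker A`, so `⟨χ, v⟩ = 0`, which is the claimed identity after dividing by `N`.

Both counts come from passing to the quotient by the point. Subspaces `W` of `V` with
`W ∩ p = 0` fibre over their images in `V / p`, and the fibre over `W'` is the set of complements
of `p` in the preimage of `W'`, which has `q ^ (dim W' · dim p)` elements; this also gives the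
`q`-Pascal recurrence for the number of subspaces of a given dimension.
-/

open Finset
open scoped Classical

/-- The Gaussian binomial coefficient `[a choose b]_q`, defined via the
`q`-Pascal recurrence `[a+1, b+1]_q = [a, b]_q + q^(b+1) * [a, b+1]_q`. -/
def gbinom (q : ℕ) : ℕ → ℕ → ℕ
  | _, 0 => 1
  | 0, _+1 => 0
  | a+1, b+1 => gbinom q a b + q^(b+1) * gbinom q a (b+1)

open Module Submodule

instance Submodule.finite_of_finite {R M : Type*} [Semiring R] [AddCommMonoid M] [Module R M]
    [Finite M] : Finite (Submodule R M) :=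
  Finite.of_injective _ SetLike.coe_injective

theorem Nat.card_subtype_eq_card_and_add_card_and_not {α : Type*} [Finite α] (P Q : α → Prop) :
    Nat.card {a // P a} = Nat.card {a // P a ∧ Q a} + Nat.card {a // P a ∧ ¬Q a} := by
  rw [← Nat.card_congr (Equiv.sumCompl fun a : {a // P a} => Q a), Nat.card_sum,
    Nat.card_congr (Equiv.subtypeSubtypeEquivSubtypeInter P Q),
    Nat.card_congr (Equiv.subtypeSubtypeEquivSubtypeInter P (¬Q ·))]

theorem Nat.card_eq_card_mul_of_forall_card_fiber_eq {α β : Type*} [Finite α] [Finite β]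
    (f : α → β) {m : ℕ} (h : ∀ b, Nat.card {a // f a = b} = m) :
    Nat.card α = Nat.card β * m := by
  have := Fintype.ofFinite β
  rw [← Nat.card_congr (Equiv.sigmaFiberEquiv f), Nat.card_sigma]
  simp [h, Nat.card_eq_fintype_card]

theorem Finset.card_filter_univ_subtype_eq_natCard {α : Type*} {P : α → Prop}
    [Fintype {a // P a}] (Q : α → Prop) [DecidablePred Q] :
    #{a : {a // P a} | Q a} = Nat.card {a // P a ∧ Q a} := by
  rw [← Fintype.card_subtype, ← Nat.card_eq_fintype_card]
  exact Nat.card_congr (Equiv.subtypeSubtypeEquivSubtypeInter P Q)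

theorem gbinom_pos (q : ℕ) : ∀ {a b : ℕ}, b ≤ a → 0 < gbinom q a b
  | a, 0, _ => by cases a <;> exact Nat.one_pos
  | _ + 1, _ + 1, h => Nat.add_pos_left (gbinom_pos q (Nat.le_of_succ_le_succ h)) _

section

variable {K V : Type*} [Field K] [AddCommGroup V] [Module K V] [FiniteDimensional K V]

theorem Submodule.card_isCompl (p : Submodule K V) :
    Nat.card {W // IsCompl p W} = Nat.card K ^ ((finrank K V - finrank K p) * finrank K p) := by
  obtain ⟨C, hC⟩ := p.exists_isCompl
  let projEquiv : {f : V →ₗ[K] p // ∀ x : p, f x = x} ≃ (C →ₗ[K] p) :=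
    { toFun f := f.1.domRestrict C
      invFun g := ⟨LinearMap.ofIsCompl hC LinearMap.id g, LinearMap.ofIsCompl_apply_left hC⟩
      left_inv f := Subtype.ext <| LinearMap.ofIsCompl_eq hC (fun x => (f.2 x).symm) fun _ => rfl
      right_inv g := by ext x; simp }
  rw [Nat.card_congr (p.isComplEquivProj.trans projEquiv), natCard_eq_pow_finrank (K := K),
    finrank_linearMap K K C p, ← finrank_add_eq_of_isCompl hC, Nat.add_sub_cancel_left]

theorem Submodule.card_disjoint_sup_eq {p t : Submodule K V} (hpt : p ≤ t) :
    Nat.card {W // Disjoint p W ∧ p ⊔ W = t} =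
      Nat.card K ^ ((finrank K t - finrank K p) * finrank K p) := by
  set p' : Submodule K t := t.mapIic.symm ⟨p, hpt⟩
  have hp' : map t.subtype p' = p := congrArg Subtype.val (t.mapIic.apply_symm_apply ⟨p, hpt⟩)
  have e₁ : {W' : Submodule K t // IsCompl p' W'} ≃ {W : Set.Iic t // IsCompl ⟨p, hpt⟩ W} :=
    t.mapIic.toEquiv.subtypeEquiv fun W' => by
      rw [t.mapIic.isCompl_iff, t.mapIic.apply_symm_apply]; rfl
  have e₂ : {W : Set.Iic t // IsCompl ⟨p, hpt⟩ W} ≃ {W // Disjoint p W ∧ p ⊔ W = t} :=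
    (Equiv.subtypeEquivRight fun _ => Set.Iic.isCompl_iff).trans <|
      Equiv.subtypeSubtypeEquivSubtype fun {W} (h : Disjoint p W ∧ p ⊔ W = t) =>
        show W ≤ t from h.2 ▸ le_sup_right
  rw [← Nat.card_congr (e₁.trans e₂), card_isCompl, ← finrank_map_subtype_eq t p', hp']

end

theorem Submodule.card_le_and_eq_card_comap_mkQ {R M : Type*} [Ring R] [AddCommGroup M]
    [Module R M] (p : Submodule R M) (P : Submodule R M → Prop) :
    Nat.card {W // p ≤ W ∧ P W} = Nat.card {W : Submodule R (M ⧸ p) // P (comap p.mkQ W)} :=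
  Nat.card_congr (((comapMkQRelIso p).toEquiv.subtypeEquiv fun _ => Iff.rfl).trans
    (Equiv.subtypeSubtypeEquivSubtypeInter (p ≤ ·) P)).symm

theorem Submodule.map_mkQ_eq_iff {R M : Type*} [Ring R] [AddCommGroup M] [Module R M]
    {p W : Submodule R M} {W' : Submodule R (M ⧸ p)} :
    map p.mkQ W = W' ↔ p ⊔ W = comap p.mkQ W' := by
  rw [← comap_map_mkQ, (comap_injective_of_surjective p.mkQ_surjective).eq_iff]

theorem Submodule.disjoint_comap_mkQ_iff {R M : Type*} [Ring R] [AddCommGroup M] [Module R M]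
    {p π : Submodule R M} (hpπ : Disjoint p π) {W : Submodule R (M ⧸ p)} :
    Disjoint (comap p.mkQ W) π ↔ Disjoint W (map p.mkQ π) := by
  simp only [disjoint_def, mem_comap, mem_map]
  constructor
  · rintro h _ hw ⟨y, hy, rfl⟩
    rw [h y hw hy, map_zero]
  · intro h v hv hvπ
    exact disjoint_def.mp hpπ v ((Quotient.mk_eq_zero p).mp (h _ hv ⟨v, hvπ, rfl⟩)) hvπ

section

variable {K V : Type*} [DivisionRing K] [AddCommGroup V] [Module K V] [FiniteDimensional K V]

theorem Submodule.finrank_comap_mkQ (p : Submodule K V) (W : Submodule K (V ⧸ p)) :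
    finrank K (comap p.mkQ W) = finrank K W + finrank K p := by
  have h := LinearMap.finrank_range_add_finrank_ker (p.mkQ.domRestrict (comap p.mkQ W))
  rw [LinearMap.range_domRestrict, LinearMap.ker_domRestrict, ker_mkQ,
    map_comap_eq_self (by simp), (comapSubtypeEquivOfLe (le_comap_mkQ p W)).finrank_eq] at h
  exact h.symm

theorem Submodule.finrank_map_mkQ_add_finrank_inf (p W : Submodule K V) :
    finrank K (map p.mkQ W) + finrank K (p ⊓ W : Submodule K V) = finrank K W := by
  have h := finrank_sup_add_finrank_inf_eq p W
  rw [← comap_map_mkQ, finrank_comap_mkQ] at h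
  omega

theorem Submodule.finrank_map_mkQ_of_disjoint {p W : Submodule K V} (h : Disjoint p W) :
    finrank K (map p.mkQ W) = finrank K W := by
  have := finrank_map_mkQ_add_finrank_inf p W
  rwa [h.eq_bot, finrank_bot, add_zero] at this

theorem Submodule.card_le_finrank_eq (p : Submodule K V) (r : ℕ) :
    Nat.card {W // p ≤ W ∧ finrank K W = r + finrank K p} =
      Nat.card {W : Submodule K (V ⧸ p) // finrank K W = r} := by
  simp_rw [card_le_and_eq_card_comap_mkQ, finrank_comap_mkQ, Nat.add_right_cancel_iff]

theorem Submodule.card_finrank_eq_zero :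
    Nat.card {W : Submodule K V // finrank K W = 0} = 1 :=
  (Nat.card_congr (Equiv.subtypeEquivRight fun _ => finrank_eq_zero)).trans Nat.card_unique

end

section

variable {K V : Type*} [Field K] [Finite K] [AddCommGroup V] [Module K V] [FiniteDimensional K V]

theorem Submodule.card_finrank_eq_disjoint (p : Submodule K V) (r : ℕ) :
    Nat.card {W : Submodule K V // finrank K W = r ∧ Disjoint p W} =
      Nat.card {W : Submodule K (V ⧸ p) // finrank K W = r} * Nat.card K ^ (r * finrank K p) := by
  have : Finite V := Module.finite_of_finite K
  have : Finite (V ⧸ p) := Module.finite_of_finite K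
  refine Nat.card_eq_card_mul_of_forall_card_fiber_eq
    (fun W => ⟨map p.mkQ W.1, (finrank_map_mkQ_of_disjoint W.2.2).trans W.2.1⟩) fun W' => ?_
  have fiber : ∀ W : Submodule K V, ((finrank K W = r ∧ Disjoint p W) ∧ map p.mkQ W = W'.1) ↔
      Disjoint p W ∧ p ⊔ W = comap p.mkQ W' := fun W =>
    ⟨fun h => ⟨h.1.2, map_mkQ_eq_iff.mp h.2⟩, fun h =>
      ⟨⟨(finrank_map_mkQ_of_disjoint h.1).symm.trans (map_mkQ_eq_iff.mpr h.2 ▸ W'.2), h.1⟩,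
        map_mkQ_eq_iff.mpr h.2⟩⟩
  rw [Nat.card_congr ((Equiv.subtypeEquivRight fun _ => Subtype.ext_iff).trans
      ((Equiv.subtypeSubtypeEquivSubtypeInter _ _).trans (Equiv.subtypeEquivRight fiber))),
    card_disjoint_sup_eq (le_comap_mkQ p _), finrank_comap_mkQ, W'.2, Nat.add_sub_cancel]

theorem Submodule.card_finrank_eq {d : ℕ} (hV : finrank K V = d) (j : ℕ) :
    Nat.card {W : Submodule K V // finrank K W = j} = gbinom (Nat.card K) d j := by
  induction d generalizing V j with
  | zero =>
    cases j with
    | zero => exact card_finrank_eq_zero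
    | succ j =>
      rw [gbinom, Nat.card_eq_zero]
      exact Or.inl ⟨fun W => by have := W.1.finrank_le; omega⟩
  | succ d ih =>
    cases j with
    | zero => exact card_finrank_eq_zero
    | succ j =>
      have : Nontrivial V := Module.nontrivial_of_finrank_eq_succ hV
      obtain ⟨x, hx⟩ := exists_ne (0 : V)
      have hℓ : finrank K (K ∙ x) = 1 := finrank_span_singleton hx
      have hquot : finrank K (V ⧸ K ∙ x) = d := by
        rw [finrank_quotient, hV, hℓ, Nat.add_sub_cancel]
      have : Finite V := Module.finite_of_finite K
      have through :
          Nat.card {W : Submodule K V // finrank K W = j + 1 ∧ K ∙ x ≤ W} =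
            gbinom (Nat.card K) d j := by
        rw [Nat.card_congr (Equiv.subtypeEquivRight fun _ => and_comm), ← hℓ,
          card_le_finrank_eq, ih hquot]
      have avoiding : Nat.card {W : Submodule K V // finrank K W = j + 1 ∧ ¬K ∙ x ≤ W} =
          gbinom (Nat.card K) d (j + 1) * Nat.card K ^ (j + 1) := by
        simp_rw [(isAtom_iff_finrank_eq_one.mpr hℓ).not_le_iff_disjoint]
        rw [card_finrank_eq_disjoint, ih hquot, hℓ, mul_one]
      rw [Nat.card_subtype_eq_card_and_add_card_and_not _ (K ∙ x ≤ ·), through, avoiding, gbinom]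
      ring


theorem Submodule.card_le_finrank_eq_disjoint {p π : Submodule K V} (hpπ : Disjoint p π) (r : ℕ) :
    Nat.card {W // p ≤ W ∧ finrank K W = r + finrank K p ∧ Disjoint W π} =
      Nat.card {W : Submodule K ((V ⧸ p) ⧸ map p.mkQ π) // finrank K W = r} *
        Nat.card K ^ (r * finrank K π) := by
  simp_rw [card_le_and_eq_card_comap_mkQ, finrank_comap_mkQ, Nat.add_right_cancel_iff,
    disjoint_comap_mkQ_iff hpπ, disjoint_comm (b := map p.mkQ π)]
  rw [card_finrank_eq_disjoint, finrank_map_mkQ_of_disjoint hpπ]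

theorem card_finrank_eq_add_one_le {n k : ℕ} (hV : finrank K V = n + 1) {p : Submodule K V}
    (hp : finrank K p = 1) :
    Nat.card {W : Submodule K V // finrank K W = k + 1 ∧ p ≤ W} = gbinom (Nat.card K) n k := by
  have := card_le_finrank_eq p k
  rw [hp] at this
  rw [Nat.card_congr (Equiv.subtypeEquivRight fun _ => and_comm), this,
    card_finrank_eq (by rw [finrank_quotient, hV, hp, Nat.add_sub_cancel])]

theorem card_finrank_eq_add_one_le_disjoint {n k : ℕ} (hV : finrank K V = n + 1)
    {p π : Submodule K V} (hp : finrank K p = 1) (hπ : finrank K π = k + 1) :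
    Nat.card {W : Submodule K V // finrank K W = k + 1 ∧ p ≤ W ∧ Disjoint W π} =
      if p ≤ π then 0 else gbinom (Nat.card K) (n - k - 1) k * Nat.card K ^ (k ^ 2 + k) := by
  have hpoint := isAtom_iff_finrank_eq_one.mpr hp
  split_ifs with hpπ
  · exact Nat.card_eq_zero.mpr <| Or.inl
      ⟨fun W => hpoint.ne_bot (le_bot_iff.mp (W.2.2.2 W.2.2.1 hpπ))⟩
  · have hdisj : Disjoint p π := hpoint.not_le_iff_disjoint.mp hpπ
    have hquot : finrank K ((V ⧸ p) ⧸ map p.mkQ π) = n - k - 1 := by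
      rw [finrank_quotient, finrank_quotient, finrank_map_mkQ_of_disjoint hdisj, hV, hp, hπ]
      omega
    have := card_le_finrank_eq_disjoint hdisj k
    rw [hp, hπ] at this
    rw [Nat.card_congr (Equiv.subtypeEquivRight fun _ => and_left_comm), this,
      card_finrank_eq hquot]
    ring

end

theorem mul_card_filter_eq_of_perp_ker {P B : Type*} [Fintype B] [DecidableEq B]
    (I : P → B → Prop) (S : B → Prop) [DecidablePred S] (π : B) {N D : ℕ}
    (hN : ∀ p, #{W | I p W} = N) (hS : ∀ p, #{W | I p W ∧ S W} = if I p π then 0 else D)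
    (L : Finset B)
    (hL : ∀ v : B → ℝ, (∀ p, ∑ W, (if I p W then v W else 0) = 0) → ∑ W ∈ L, v W = 0) :
    (N : ℝ) * #{W ∈ L | S W} = D * (#L - N * if π ∈ L then 1 else 0) := by
  set v : B → ℝ := fun W => N * (if S W then 1 else 0) - D + D * N * (if W = π then 1 else 0)
  have sum_v : ∀ s : Finset B, ∑ W ∈ s, v W =
      N * #{W ∈ s | S W} - D * #s + D * N * (if π ∈ s then 1 else 0) := by
    intro s
    simp only [v, sum_add_distrib, sum_sub_distrib, ← mul_sum, sum_ite_eq', sum_boole, sum_const,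
      nsmul_eq_mul]
    ring
  have hrow : ∀ p, ∑ W, (if I p W then v W else 0) = 0 := by
    intro p
    rw [← sum_filter, sum_v, filter_filter, hS, hN]
    by_cases hp : I p π <;> simp [hp, mul_comm]
  linear_combination (sum_v L).symm.trans (hL v hrow)

theorem stmt4_general (q n k : ℕ) (F : Type) [Field F] [Fintype F]
    (hq : Fintype.card F = q)
    [Fintype {W : Submodule F (Fin (n+1) → F) // Module.finrank F W = k + 1}]
    (L : Finset {W : Submodule F (Fin (n+1) → F) // Module.finrank F W = k + 1})
    (x : ℝ) (hx : (L.card : ℝ) = x * gbinom q n k)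
    (hker : ∀ v : {W : Submodule F (Fin (n+1) → F) // Module.finrank F W = k + 1} → ℝ,
      (∀ p : {P : Submodule F (Fin (n+1) → F) // Module.finrank F P = 1},
        ∑ W : {W : Submodule F (Fin (n+1) → F) // Module.finrank F W = k + 1},
          (if p.1 ≤ W.1 then v W else 0) = 0) →
      ∑ W ∈ L, v W = 0)
    (π : {W : Submodule F (Fin (n+1) → F) // Module.finrank F W = k + 1}) :
    (((L.filter fun W => W.1 ⊓ π.1 = ⊥).card : ℝ))
      = (x - (if π ∈ L then 1 else 0)) * (gbinom q (n - k - 1) k * (q : ℝ)^(k^2 + k)) := by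
  have hq' : Nat.card F = q := Nat.card_eq_fintype_card.trans hq
  have hV : finrank F (Fin (n + 1) → F) = n + 1 := finrank_fin_fun F
  have hkn : k ≤ n := by have := π.1.finrank_le; rw [π.2, hV] at this; omega
  have key := mul_card_filter_eq_of_perp_ker
    (P := {P : Submodule F (Fin (n + 1) → F) // finrank F P = 1})
    (fun p W => p.1 ≤ W.1) (fun W => W.1 ⊓ π.1 = ⊥) π
    (fun p => (card_filter_univ_subtype_eq_natCard (p.1 ≤ ·)).trans
      (hq' ▸ card_finrank_eq_add_one_le hV p.2))
    (fun p => (card_filter_univ_subtype_eq_natCard (fun W => p.1 ≤ W ∧ W ⊓ π.1 = ⊥)).trans <| by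
      simp_rw [← disjoint_iff]
      rw [card_finrank_eq_add_one_le_disjoint hV p.2 π.2, hq']) L hker
  rw [hx] at key
  push_cast at key
  apply mul_left_cancel₀ (Nat.cast_ne_zero.mpr (gbinom_pos q hkn).ne' : (gbinom q n k : ℝ) ≠ 0)
  linear_combination key

/-- If the characteristic vector of a set $\mathcal L$ of $k$-subspaces of
$\mathrm{PG}(n,q)$ lies in the row space $(\ker A)^\perp$ of the point–$k$-space
incidence matrix $A$, then for every $k$-subspace $\pi$ the number of elements of
$\mathcal L$ disjoint from $\pi$ equals $(x-\chi(\pi))\binom{n-k-1}{k}_q q^{k^2+k}$. -/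
theorem stmt4 (q n k : ℕ) (F : Type) [Field F] [Fintype F]
    (hq : Fintype.card F = q) (hn : 2*k + 1 ≤ n)
    [Fintype {W : Submodule F (Fin (n+1) → F) // Module.finrank F W = k + 1}]
    (L : Finset {W : Submodule F (Fin (n+1) → F) // Module.finrank F W = k + 1})
    (x : ℝ) (hx : (L.card : ℝ) = x * gbinom q n k)
    (hker : ∀ v : {W : Submodule F (Fin (n+1) → F) // Module.finrank F W = k + 1} → ℝ,
      (∀ p : {P : Submodule F (Fin (n+1) → F) // Module.finrank F P = 1},
        ∑ W : {W : Submodule F (Fin (n+1) → F) // Module.finrank F W = k + 1},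
          (if p.1 ≤ W.1 then v W else 0) = 0) →
      ∑ W ∈ L, v W = 0)
    (π : {W : Submodule F (Fin (n+1) → F) // Module.finrank F W = k + 1}) :
    (((L.filter fun W => W.1 ⊓ π.1 = ⊥).card : ℝ))
      = (x - (if π ∈ L then 1 else 0)) * (gbinom q (n - k - 1) k * (q : ℝ)^(k^2 + k)) :=
  stmt4_general q n k F hq L x hx hker π
end

section
/- Let $\pi, \pi'$ be two disjoint $k$-subspaces of $\mathrm{PG}(n,q)$ with $n \geq 2k+1$, and $\Sigma = \langle \pi, \pi' \rangle$ their span (a $(2k+1)$-subspace). For $0 \le i \le k$, the number of $i$-subspaces of $\Sigma$ disjoint from both $\pi$ and $\pi'$ equals $q^{\binom{i+1}{2}} \binom{k+1}{i+1}_q \prod_{j=0}^{i} (q^{k-j+1} - 1)$. -/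
/-! Identify `⟨π, π'⟩` with `π × π'`. A subspace meeting `π'` trivially is the graph of a linear
map from a subspace `P ≤ π` to `π'`, and it meets `π` trivially exactly when that map is
injective. Hence the count is the number `[k+1, i+1]_q` of `(i+1)`-dimensional subspaces `P ≤ π`
times the number `∏_{j ≤ i} (q^(k+1) - q^j)` of injective linear maps `P → π'`. -/

open Finset
open scoped Classical

open Module Function

section GaussianBinomial

variable (q : ℕ)

theorem gbinom_eq_zero_of_lt : ∀ {a b : ℕ}, a < b → gbinom q a b = 0
  | 0, _ + 1, _ => rfl
  | _ + 1, _ + 1, h => by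
    rw [gbinom, gbinom_eq_zero_of_lt (by omega), gbinom_eq_zero_of_lt (by omega), mul_zero,
      add_zero]

theorem prod_range_pow_sub_pow {m d : ℕ} (hd : d ≤ m) :
    ∏ j ∈ range d, (q ^ m - q ^ j) = q ^ d.choose 2 * ∏ j ∈ range d, (q ^ (m - j) - 1) := by
  have h : ∀ j ∈ range d, q ^ m - q ^ j = q ^ j * (q ^ (m - j) - 1) := fun j hj => by
    rw [Nat.mul_sub, mul_one, ← pow_add, Nat.add_sub_cancel' (by grind)]
  rw [prod_congr rfl h, prod_mul_distrib, prod_pow_eq_pow_sum, sum_range_id,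
    Nat.choose_two_right]

variable {q}

theorem gbinom_mul_prod_pow_succ_sub_one (hq : 1 ≤ q) : ∀ {m d : ℕ}, d ≤ m →
    gbinom q m d * ∏ j ∈ range d, (q ^ (j + 1) - 1) = ∏ j ∈ range d, (q ^ (m - j) - 1)
  | _, 0, _ => by simp [gbinom]
  | m + 1, d + 1, hd => by
    set A := ∏ j ∈ range d, (q ^ (m - j) - 1)
    have ih₀ : gbinom q m d * ∏ j ∈ range d, (q ^ (j + 1) - 1) = A :=
      gbinom_mul_prod_pow_succ_sub_one hq (by omega)
    have ih₁ : gbinom q m (d + 1) * ∏ j ∈ range (d + 1), (q ^ (j + 1) - 1)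
        = A * (q ^ (m - d) - 1) := by
      rcases (show d < m ∨ d = m by omega) with hdm | rfl
      · rw [gbinom_mul_prod_pow_succ_sub_one hq hdm, prod_range_succ]
      · simp [gbinom_eq_zero_of_lt q (Nat.lt_succ_self d)]
    have hsucc : ∏ j ∈ range (d + 1), (q ^ (m + 1 - j) - 1) = A * (q ^ (m + 1) - 1) := by
      rw [prod_range_succ', Nat.sub_zero]
      exact congrArg (· * _) (prod_congr rfl fun j _ => by rw [Nat.add_sub_add_right])
    have hpow : q ^ (d + 1) * q ^ (m - d) = q ^ (m + 1) := by rw [← pow_add]; congr 1; omega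
    rw [hsucc, gbinom, prod_range_succ]
    rw [prod_range_succ] at ih₁
    have h₁ := Nat.one_le_pow (d + 1) q hq
    have h₂ := Nat.one_le_pow (m - d) q hq
    have h₃ := Nat.one_le_pow (m + 1) q hq
    zify [h₁, h₂, h₃] at ih₀ ih₁ hpow ⊢
    linear_combination ((q : ℤ) ^ (d + 1) - 1) * ih₀ + (q : ℤ) ^ (d + 1) * ih₁ + (A : ℤ) * hpow

theorem gbinom_mul_prod_pow_sub_pow (hq : 1 ≤ q) {m d : ℕ} (hd : d ≤ m) :
    gbinom q m d * ∏ j ∈ range d, (q ^ d - q ^ j) = ∏ j ∈ range d, (q ^ m - q ^ j) := by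
  have hreflect : ∏ j ∈ range d, (q ^ (d - j) - 1) = ∏ j ∈ range d, (q ^ (j + 1) - 1) := by
    rw [← prod_range_reflect]
    exact prod_congr rfl fun j hj => by grind
  rw [prod_range_pow_sub_pow q le_rfl, prod_range_pow_sub_pow q hd, hreflect,
    ← gbinom_mul_prod_pow_succ_sub_one hq hd, mul_left_comm]

end GaussianBinomial

theorem Nat.card_sigma_of_card_eq {α : Type*} {β : α → Type*} [Finite α] [∀ a, Finite (β a)]
    {c : ℕ} (h : ∀ a, Nat.card (β a) = c) : Nat.card (Σ a, β a) = Nat.card α * c := by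
  have := Fintype.ofFinite α
  rw [Nat.card_sigma, Finset.sum_congr rfl fun a _ => h a, sum_const, Finset.card_univ,
    smul_eq_mul, Nat.card_eq_fintype_card]

theorem Nat.card_eq_mul_of_card_fiber {α β : Type*} [Finite α] [Finite β] (f : α → β) {c : ℕ}
    (h : ∀ b, Nat.card {a // f a = b} = c) : Nat.card α = Nat.card β * c := by
  rw [← Nat.card_sigma_of_card_eq h, Nat.card_congr (Equiv.sigmaFiberEquiv f)]

theorem Module.Basis.injective_constr_iff {ι K V W : Type*} [CommRing K] [AddCommGroup V]
    [Module K V] [AddCommGroup W] [Module K W] (b : Basis ι K V) (w : ι → W) :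
    Function.Injective (b.constr K w) ↔ LinearIndependent K w := by
  refine ⟨fun h => ?_, b.injective_constr_of_linearIndependent⟩
  simpa [comp_def, b.constr_basis] using
    b.linearIndependent.map' _ (LinearMap.ker_eq_bot.mpr h)

namespace LinearPMap

variable {R V W : Type*} [Ring R] [AddCommGroup V] [Module R V] [AddCommGroup W] [Module R W]

theorem graph_eq_range_prod (f : V →ₗ.[R] W) :
    f.graph = LinearMap.range (f.domain.subtype.prod f.toFun) := by
  ext x
  simp [Prod.ext_iff, eq_comm]

theorem finrank_graph (f : V →ₗ.[R] W) : finrank R f.graph = finrank R f.domain := by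
  rw [graph_eq_range_prod, LinearMap.finrank_range_of_inj]
  exact fun _ _ h => Subtype.ext (congrArg Prod.fst h)

theorem disjoint_graph_range_inr (f : V →ₗ.[R] W) :
    Disjoint f.graph (LinearMap.range (LinearMap.inr R V W)) := by
  rw [Submodule.disjoint_def]
  rintro ⟨x, y⟩ hxy ⟨y', hy'⟩
  obtain rfl : x = 0 := (congrArg Prod.fst hy').symm
  simpa using f.graph_fst_eq_zero_snd hxy rfl

theorem disjoint_graph_range_inl_iff (f : V →ₗ.[R] W) :
    Disjoint f.graph (LinearMap.range (LinearMap.inl R V W)) ↔ Injective f.toFun := by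
  rw [Submodule.disjoint_def, injective_iff_map_eq_zero]
  constructor
  · intro h y hy
    exact Subtype.ext (congrArg Prod.fst (h _ (f.mem_graph y) ⟨y, Prod.ext rfl hy.symm⟩))
  · rintro h _ hx ⟨x, rfl⟩
    obtain ⟨y, hy, hfy⟩ := f.mem_graph_iff.mp hx
    have hx₀ : x = 0 := hy.symm.trans (congrArg Subtype.val (h y hfy))
    simp [hx₀]

end LinearPMap

theorem Submodule.toLinearPMap_graph_eq_of_disjoint {R V W : Type*} [Ring R] [AddCommGroup V]
    [Module R V] [AddCommGroup W] [Module R W] {U : Submodule R (V × W)}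
    (h : Disjoint U (LinearMap.range (LinearMap.inr R V W))) : U.toLinearPMap.graph = U :=
  U.toLinearPMap_graph_eq fun x hx hx₁ => by
    rw [Submodule.disjoint_def.mp h x hx ⟨x.2, Prod.ext hx₁.symm rfl⟩, Prod.snd_zero]

theorem Submodule.card_subtype_map_of_injective {R M N : Type*} [Semiring R] [AddCommMonoid M]
    [Module R M] [AddCommMonoid N] [Module R N] {f : M →ₗ[R] N} (hf : Injective f)
    {p : Submodule R N → Prop} (hp : ∀ W, p W → W ≤ LinearMap.range f) :
    Nat.card {U : Submodule R M // p (U.map f)} = Nat.card {W // p W} := by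
  refine Nat.card_congr (Equiv.ofBijective (fun U => ⟨U.1.map f, U.2⟩)
    ⟨fun U U' h => ?_, fun W => ?_⟩)
  · exact Subtype.ext (Submodule.map_injective_of_injective hf (congrArg Subtype.val h))
  · have hW := Submodule.map_comap_eq_of_le (hp W.1 W.2)
    exact ⟨⟨W.1.comap f, by rw [hW]; exact W.2⟩, Subtype.ext hW⟩

theorem card_submodule_le_sup_eq_card_submodule_prod {R M : Type*} [Ring R] [AddCommGroup M]
    [Module R M] {A B : Submodule R M} (hAB : A ⊓ B = ⊥) (d : ℕ) :
    Nat.card {W : Submodule R M // finrank R W = d ∧ W ≤ A ⊔ B ∧ W ⊓ A = ⊥ ∧ W ⊓ B = ⊥}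
      = Nat.card {U : Submodule R (A × B) // finrank R U = d
          ∧ Disjoint U (LinearMap.range (LinearMap.inl R A B))
          ∧ Disjoint U (LinearMap.range (LinearMap.inr R A B))} := by
  let φ := A.subtype.coprod B.subtype
  have hφ : Injective φ := by
    rw [← LinearMap.ker_eq_bot, LinearMap.ker_coprod_of_disjoint_range, A.ker_subtype,
      B.ker_subtype, Submodule.prod_bot]
    rwa [A.range_subtype, B.range_subtype, disjoint_iff]
  have hinl : (LinearMap.range (LinearMap.inl R A B)).map φ = A := by
    rw [← LinearMap.range_comp, LinearMap.coprod_inl, A.range_subtype]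
  have hinr : (LinearMap.range (LinearMap.inr R A B)).map φ = B := by
    rw [← LinearMap.range_comp, LinearMap.coprod_inr, B.range_subtype]
  have hdisj (U S : Submodule R (A × B)) : U.map φ ⊓ S.map φ = ⊥ ↔ Disjoint U S := by
    rw [← Submodule.map_inf φ hφ, disjoint_iff, ← Submodule.map_bot φ,
      (Submodule.map_injective_of_injective hφ).eq_iff]
  rw [← Submodule.card_subtype_map_of_injective hφ fun W hW => A.sup_eq_range B ▸ hW.2.1]
  refine Nat.card_congr (Equiv.subtypeEquivRight fun U => ?_)
  rw [← (Submodule.equivMapOfInjective φ hφ U).finrank_eq, ← hdisj, ← hdisj, hinl, hinr,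
    Submodule.sup_eq_range]
  exact and_congr_right fun _ => and_iff_right LinearMap.map_le_range

section FiniteField

variable {F V W : Type*} [Field F] [Fintype F] [AddCommGroup V] [Module F V] [Finite V]
  [AddCommGroup W] [Module F W] [Finite W]

theorem card_injective_linearMap (h : finrank F V ≤ finrank F W) :
    Nat.card {g : V →ₗ[F] W // Injective g}
      = ∏ j ∈ range (finrank F V), (Fintype.card F ^ finrank F W - Fintype.card F ^ j) := by
  let b := Module.finBasis F V
  rw [← Nat.card_congr (Equiv.subtypeEquiv (b.constr F).toEquiv fun w =>
    (b.injective_constr_iff w).symm), card_linearIndependent h, Fin.prod_univ_eq_prod_range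
    (fun j => Fintype.card F ^ finrank F W - Fintype.card F ^ j)]

theorem card_submodule_finrank_eq {d : ℕ} (hd : d ≤ finrank F V) :
    Nat.card {P : Submodule F V // finrank F P = d} = gbinom (Fintype.card F) (finrank F V) d := by
  set q := Fintype.card F
  let spanOf (v : {v : Fin d → V // LinearIndependent F v}) :
      {P : Submodule F V // finrank F P = d} :=
    ⟨Submodule.span F (Set.range v.1), by rw [finrank_span_eq_card v.2, Fintype.card_fin]⟩
  have hfiber (P : {P : Submodule F V // finrank F P = d}) :
      {v // spanOf v = P} ≃ {w : Fin d → P.1 // LinearIndependent F w} :=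
    { toFun v := ⟨fun i => ⟨v.1.1 i, congrArg Subtype.val v.2 ▸
      Submodule.subset_span (Set.mem_range_self i)⟩, .of_comp P.1.subtype v.1.2⟩
      invFun w := ⟨⟨P.1.subtype ∘ w.1, w.2.map' _ P.1.ker_subtype⟩, Subtype.ext <| by
        change Submodule.span F (Set.range (P.1.subtype ∘ w.1)) = P.1
        rw [Set.range_comp, ← Submodule.map_span,
          w.2.span_eq_top_of_card_eq_finrank' (by rw [Fintype.card_fin, P.2]), Submodule.map_top,
          Submodule.range_subtype]⟩
      left_inv _ := rfl
      right_inv _ := rfl }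
  have hcount := Nat.card_eq_mul_of_card_fiber spanOf (c := ∏ j ∈ range d, (q ^ d - q ^ j))
    fun P => by
      rw [Nat.card_congr (hfiber P), card_linearIndependent P.2.ge, P.2,
        Fin.prod_univ_eq_prod_range (fun j => q ^ d - q ^ j)]
  have hq : 1 < q := Fintype.one_lt_card
  have hpos : 0 < ∏ j ∈ range d, (q ^ d - q ^ j) :=
    prod_pos fun j hj => Nat.sub_pos_of_lt (Nat.pow_lt_pow_right hq (mem_range.mp hj))
  rw [card_linearIndependent hd, Fin.prod_univ_eq_prod_range (fun j => q ^ finrank F V - q ^ j),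
    ← gbinom_mul_prod_pow_sub_pow hq.le hd] at hcount
  exact (Nat.eq_of_mul_eq_mul_right hpos hcount).symm

theorem card_submodule_prod_disjoint_inl_inr {d : ℕ} (hV : d ≤ finrank F V)
    (hW : d ≤ finrank F W) :
    Nat.card {U : Submodule F (V × W) // finrank F U = d
        ∧ Disjoint U (LinearMap.range (LinearMap.inl F V W))
        ∧ Disjoint U (LinearMap.range (LinearMap.inr F V W))}
      = gbinom (Fintype.card F) (finrank F V) d
          * ∏ j ∈ range d, (Fintype.card F ^ finrank F W - Fintype.card F ^ j) := by
  let graphOf (f : {f : V →ₗ.[F] W // finrank F f.domain = d ∧ Injective f.toFun}) :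
      {U : Submodule F (V × W) // finrank F U = d
        ∧ Disjoint U (LinearMap.range (LinearMap.inl F V W))
        ∧ Disjoint U (LinearMap.range (LinearMap.inr F V W))} :=
    ⟨f.1.graph, f.1.finrank_graph.trans f.2.1, f.1.disjoint_graph_range_inl_iff.mpr f.2.2,
      f.1.disjoint_graph_range_inr⟩
  have hgraph : Bijective graphOf := by
    refine ⟨fun f g h => Subtype.ext (LinearPMap.eq_of_eq_graph (congrArg Subtype.val h)),
      fun U => ?_⟩
    have hU := Submodule.toLinearPMap_graph_eq_of_disjoint U.2.2.2
    refine ⟨⟨U.1.toLinearPMap, ?_, ?_⟩, Subtype.ext hU⟩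
    · rw [← LinearPMap.finrank_graph, hU, U.2.1]
    · rw [← LinearPMap.disjoint_graph_range_inl_iff, hU]
      exact U.2.2.1
  let restrict : {f : V →ₗ.[F] W // finrank F f.domain = d ∧ Injective f.toFun} ≃
      Σ P : {P : Submodule F V // finrank F P = d}, {g : P.1 →ₗ[F] W // Injective g} :=
    { toFun f := ⟨⟨f.1.domain, f.2.1⟩, ⟨f.1.toFun, f.2.2⟩⟩
      invFun x := ⟨⟨x.1.1, x.2.1⟩, x.1.2, x.2.2⟩
      left_inv _ := rfl
      right_inv _ := rfl }
  have (P : Submodule F V) : Finite (P →ₗ[F] W) := Module.finite_of_finite F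
  rw [← Nat.card_congr (Equiv.ofBijective graphOf hgraph), Nat.card_congr restrict,
    Nat.card_sigma_of_card_eq fun P => by rw [card_injective_linearMap (P.2.trans_le hW), P.2],
    card_submodule_finrank_eq hV]

end FiniteField

theorem stmt14_general (q n k i : ℕ) (F : Type) [Field F] [Fintype F]
    (hq : Fintype.card F = q) (hi : i ≤ k)
    (π π' : Submodule F (Fin (n+1) → F))
    (hπ : Module.finrank F π = k + 1) (hπ' : Module.finrank F π' = k + 1)
    (hdisj : π ⊓ π' = ⊥) :
    Nat.card {W : Submodule F (Fin (n+1) → F) //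
        Module.finrank F W = i + 1 ∧ W ≤ π ⊔ π' ∧ W ⊓ π = ⊥ ∧ W ⊓ π' = ⊥}
      = q ^ (Nat.choose (i+1) 2) * gbinom q (k+1) (i+1)
          * ∏ j ∈ Finset.range (i+1), (q^(k - j + 1) - 1) := by
  subst hq
  rw [card_submodule_le_sup_eq_card_submodule_prod hdisj,
    card_submodule_prod_disjoint_inl_inr (hπ ▸ by omega) (hπ' ▸ by omega), hπ, hπ',
    prod_range_pow_sub_pow _ (by omega), mul_left_comm, ← mul_assoc]
  exact congrArg _ (prod_congr rfl fun j hj => by rw [Nat.sub_add_comm (by grind)])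

/-- For disjoint $k$-subspaces $\pi,\pi'$ of $\mathrm{PG}(n,q)$ spanning
$\Sigma = \langle\pi,\pi'\rangle$, and $0 \le i \le k$, the number of $i$-subspaces of
$\Sigma$ disjoint from both $\pi$ and $\pi'$ equals
$q^{\binom{i+1}{2}}\binom{k+1}{i+1}_q\prod_{j=0}^{i}(q^{k-j+1}-1)$. -/
theorem stmt14 (q n k i : ℕ) (F : Type) [Field F] [Fintype F]
    (hq : Fintype.card F = q) (hn : 2*k + 1 ≤ n) (hi : i ≤ k)
    (π π' : Submodule F (Fin (n+1) → F))
    (hπ : Module.finrank F π = k + 1) (hπ' : Module.finrank F π' = k + 1)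
    (hdisj : π ⊓ π' = ⊥) :
    Nat.card {W : Submodule F (Fin (n+1) → F) //
        Module.finrank F W = i + 1 ∧ W ≤ π ⊔ π' ∧ W ⊓ π = ⊥ ∧ W ⊓ π' = ⊥}
      = q ^ (Nat.choose (i+1) 2) * gbinom q (k+1) (i+1)
          * ∏ j ∈ Finset.range (i+1), (q^(k - j + 1) - 1) :=
  stmt14_general q n k i F hq hi π π' hπ hπ' hdisj
end

section
/- For integers $k \geq 2$, $n \geq 3k+2$, and $q \geq 2$, the following inequality holds: $\binom{n}{k}_q - \binom{n-k-1}{k}_q q^{k^2+k} \leq \frac{q^{k+1}-1}{q-1} \binom{n-1}{k-1}_q$. -/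
open Finset
open scoped Classical

lemma gbinom_rec (q a b : ℕ) :
    gbinom q (a+1) (b+1) = gbinom q a b + q^(b+1) * gbinom q a (b+1) := rfl

lemma gbinom_tele (q b : ℕ) : ∀ m n, gbinom q (n + m) (b+1) =
    (∑ i ∈ Finset.range m, q^(i*(b+1)) * gbinom q (n + m - 1 - i) b)
      + q^(m*(b+1)) * gbinom q n (b+1) := by
  intro m
  induction m with
  | zero => intro n; simp
  | succ m ih =>
      intro n
      have h1 : n + (m+1) = (n + m) + 1 := by omega
      rw [h1, gbinom_rec, ih n, Nat.mul_add, Finset.mul_sum,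
        Finset.sum_range_succ']
      have h0 : n + m + 1 - 1 - 0 = n + m := by omega
      have hterm : ∀ i ∈ Finset.range m,
          q ^ ((i+1) * (b + 1)) * gbinom q (n + m + 1 - 1 - (i+1)) b
            = q ^ (b + 1) * (q ^ (i * (b + 1)) * gbinom q (n + m - 1 - i) b) := by
        intro i hi
        have h2 : n + m + 1 - 1 - (i+1) = n + m - 1 - i := by omega
        have h3 : (i+1) * (b+1) = (b+1) + i*(b+1) := by ring
        rw [h2, h3, pow_add, mul_assoc]
      rw [Finset.sum_congr rfl hterm, h0]
      have h4 : (m+1)*(b+1) = (b+1) + m*(b+1) := by ring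
      rw [h4, pow_add, mul_assoc]
      ring

lemma gbinom_grow (q b : ℕ) : ∀ i a, q^(i*(b+1)) * gbinom q a (b+1) ≤ gbinom q (a+i) (b+1) := by
  intro i
  induction i with
  | zero => intro a; simp
  | succ i ih =>
      intro a
      have h3 : (i+1) * (b+1) = (b+1) + i*(b+1) := by ring
      calc q^((i+1)*(b+1)) * gbinom q a (b+1)
          = q^(b+1) * (q^(i*(b+1)) * gbinom q a (b+1)) := by
            rw [h3, pow_add, mul_assoc]
        _ ≤ q^(b+1) * gbinom q (a+i) (b+1) := by
            exact Nat.mul_le_mul_left _ (ih a)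
        _ ≤ gbinom q (a+i+1) (b+1) := by
            rw [gbinom_rec]; omega

/-- $\binom{n}{k}_q - \binom{n-k-1}{k}_q q^{k^2+k} \le \frac{q^{k+1}-1}{q-1}\binom{n-1}{k-1}_q$
for $k \ge 2$, $n \ge 3k+2$, $q \ge 2$. -/
theorem stmt17 (q n k : ℕ) (hq : 2 ≤ q) (hk : 2 ≤ k) (hn : 3*k + 2 ≤ n) :
    (gbinom q n k : ℝ) - (gbinom q (n - k - 1) k : ℝ) * (q : ℝ)^(k^2 + k)
      ≤ (((q : ℝ)^(k+1) - 1)/((q : ℝ) - 1)) * (gbinom q (n - 1) (k - 1) : ℝ) := by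
  obtain ⟨b, rfl⟩ : ∃ b, k = b + 2 := ⟨k - 2, by omega⟩
  set n0 : ℕ := n - b - 3 with hn0
  have hsplit : n = n0 + (b + 3) := by omega
  have htele := gbinom_tele q (b+1) (b+3) n0
  rw [← hsplit] at htele
  have htele' : gbinom q n (b+2) =
      (∑ i ∈ Finset.range (b+3), q^(i*(b+2)) * gbinom q (n - 1 - i) (b+1))
        + q^((b+3)*(b+2)) * gbinom q n0 (b+2) := by
    rw [htele]
  -- bound each term of the sum
  have hbound : (∑ i ∈ Finset.range (b+3), q^(i*(b+2)) * gbinom q (n - 1 - i) (b+1))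
      ≤ (∑ i ∈ Finset.range (b+3), q^i) * gbinom q (n - 1) (b+1) := by
    rw [Finset.sum_mul]
    apply Finset.sum_le_sum
    intro i hi
    have hi' : i < b + 3 := Finset.mem_range.mp hi
    have h5 : i * (b+2) = i + i*(b+1) := by ring
    have h6 : (n - 1 - i) + i = n - 1 := by omega
    calc q^(i*(b+2)) * gbinom q (n-1-i) (b+1)
        = q^i * (q^(i*(b+1)) * gbinom q (n-1-i) (b+1)) := by
          rw [h5, pow_add, mul_assoc]
      _ ≤ q^i * gbinom q ((n-1-i)+i) (b+1) := Nat.mul_le_mul_left _ (gbinom_grow q b i _)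
      _ = q^i * gbinom q (n-1) (b+1) := by rw [h6]
  -- now move to ℝ
  have hq1 : (q : ℝ) ≠ 1 := by
    have : (2:ℝ) ≤ (q:ℝ) := by exact_mod_cast hq
    linarith
  have hgeom : ∑ i ∈ Finset.range (b+3), (q:ℝ)^i = ((q:ℝ)^(b+3) - 1)/((q:ℝ) - 1) :=
    geom_sum_eq hq1 _
  have hk1 : b + 2 - 1 = b + 1 := by omega
  have hnk : n - (b+2) - 1 = n0 := by omega
  have hexp : (b+2)^2 + (b+2) = (b+3)*(b+2) := by ring
  rw [hk1, hnk, hexp]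
  have hcast : (gbinom q n (b+2) : ℝ) =
      (∑ i ∈ Finset.range (b+3), (q:ℝ)^(i*(b+2)) * (gbinom q (n - 1 - i) (b+1) : ℝ))
        + (q:ℝ)^((b+3)*(b+2)) * (gbinom q n0 (b+2) : ℝ) := by
    exact_mod_cast congrArg (fun x : ℕ => (x : ℝ)) htele'
  have hbd : (∑ i ∈ Finset.range (b+3), (q:ℝ)^(i*(b+2)) * (gbinom q (n - 1 - i) (b+1) : ℝ))
      ≤ (∑ i ∈ Finset.range (b+3), (q:ℝ)^i) * (gbinom q (n - 1) (b+1) : ℝ) := by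
    exact_mod_cast hbound
  have hfin : (b+2)+1 = b+3 := by omega
  rw [hcast, hfin, ← hgeom]
  linarith
end
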